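/- arXiv:2109.05965 — 6 statements merged into one kernel-verified Lean document; each statement's English description precedes it below -/
import Mathlib

section
/- Let $\Psi \in \mathbb{F}_p^{r \times (M+1)}$ be a translation-invariant system of linear forms whose matrix has first column equal to the all-ones vector, and let $Z = \{a_1, \ldots, a_r\} \subset \mathbb{F}_p^M$ be the associated set (where $a_i$ is the row $\psi_i$ restricted to its last $M$ coordinates). Then $\Psi$ has Cauchy-Schwarz complexity at most $k$ at $i$ if and only if $Z \setminus \{a_i\}$ can be covered by $k+1$ affine subspaces of $\mathbb{F}_p^M$, each of which excludes $a_i$. -/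
/-!
Writing `ψⱼ = (1, aⱼ)`, a linear combination `∑ cⱼ ψⱼ` equals `ψᵢ = (1, aᵢ)` exactly when
`∑ cⱼ = 1` and `∑ cⱼ aⱼ = aᵢ`, i.e. when `aᵢ` is an affine combination of the `aⱼ`. Hence
`ψᵢ ∉ span {ψⱼ | j ∈ S}` iff `aᵢ ∉ affineSpan {aⱼ | j ∈ S}`: a cover by sets of forms avoiding `ψᵢ`
in their span yields the affine spans of the corresponding points, and conversely an affine
subspace `W` avoiding `aᵢ` yields the set of forms `ψⱼ` with `aⱼ ∈ W`.
-/

open Submodule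

section

variable {R V : Type*} [Ring R] [Nontrivial R] [AddCommGroup V] [Module R V]

theorem Prod.mk_one_mem_span_image_iff (s : Set V) (x : V) :
    ((1 : R), x) ∈ span R (Prod.mk 1 '' s) ↔ x ∈ affineSpan R s := by
  constructor
  · intro hx
    obtain ⟨x₀, hx₀⟩ : s.Nonempty := by
      by_contra! hs
      simp [hs] at hx
    -- `(c, y) ↦ y - c • x₀` sends `(1, y)` to `y -ᵥ x₀`, so it maps the span into `vectorSpan R s`.
    let L : R × V →ₗ[R] V := LinearMap.snd R R V - (LinearMap.fst R R V).smulRight x₀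
    have hL : span R (Prod.mk 1 '' s) ≤ (vectorSpan R s).comap L := by
      rw [span_le]
      rintro _ ⟨y, hy, rfl⟩
      simpa [L] using vsub_mem_vectorSpan R hy hx₀
    rw [← AffineSubspace.vsub_right_mem_direction_iff_mem (mem_affineSpan R hx₀),
      direction_affineSpan]
    simpa [L] using hL hx
  · intro hx
    let f : V →ᵃ[R] R × V :=
      AffineMap.const R V ((1 : R), (0 : V)) + (LinearMap.inr R R V).toAffineMap
    have hf : affineSpan R s ≤ (span R (Prod.mk 1 '' s)).toAffineSubspace.comap f := by
      rw [affineSpan_le]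
      intro y hy
      have : ((1 : R), y) ∈ span R (Prod.mk 1 '' s) := subset_span ⟨y, hy, rfl⟩
      simpa [f] using this
    simpa [f] using hf hx

theorem Fin.cons_one_mem_span_image_iff {n : ℕ} (s : Set (Fin n → R)) (x : Fin n → R) :
    (Fin.cons 1 x : Fin (n + 1) → R) ∈ span R (Fin.cons 1 '' s) ↔ x ∈ affineSpan R s := by
  let e := Fin.consLinearEquiv R (fun _ : Fin (n + 1) => R)
  have hs : (Fin.cons 1 '' s : Set (Fin (n + 1) → R)) = e '' (Prod.mk 1 '' s) := by
    rw [Set.image_image]; rfl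
  rw [hs, ← LinearEquiv.coe_coe, span_image, mem_map_equiv, ← Prod.mk_one_mem_span_image_iff]
  rfl

end

theorem stmt_2_general (p : ℕ) (hp : p.Prime) (r M k : ℕ)
    (Ψ : Fin r → (Fin (M + 1) → ZMod p))
    (hones : ∀ i, Ψ i 0 = 1)
    (a : Fin r → (Fin M → ZMod p))
    (ha : ∀ i m, a i m = Ψ i m.succ)
    (i : Fin r) :
    (∃ C : Fin (k + 1) → Set (Fin (M + 1) → ZMod p),
      (∀ t, C t ⊆ Ψ '' {j | j ≠ i}) ∧
      (∀ j, j ≠ i → ∃ t, Ψ j ∈ C t) ∧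
      (∀ t, Ψ i ∉ Submodule.span (ZMod p) (C t)))
    ↔ (∃ W : Fin (k + 1) → AffineSubspace (ZMod p) (Fin M → ZMod p),
      (∀ j, j ≠ i → ∃ t, a j ∈ W t) ∧
      (∀ t, a i ∉ W t)) := by
  have : Fact p.Prime := ⟨hp⟩
  have hΨ : Ψ = fun j => Fin.cons 1 (a j) := by
    ext j m
    cases m using Fin.cases <;> simp [hones, ha]
  have hspan (S : Set (Fin r)) :
      Ψ i ∈ span (ZMod p) (Ψ '' S) ↔ a i ∈ affineSpan (ZMod p) (a '' S) := by
    rw [← Fin.cons_one_mem_span_image_iff, Set.image_image, hΨ]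
  constructor
  · rintro ⟨C, hCΨ, hcover, hCi⟩
    refine ⟨fun t => affineSpan (ZMod p) (a '' (Ψ ⁻¹' C t)), fun j hj => ?_, fun t hai => ?_⟩
    · obtain ⟨t, ht⟩ := hcover j hj
      exact ⟨t, mem_affineSpan _ ⟨j, ht, rfl⟩⟩
    · apply hCi t
      rwa [← Set.image_preimage_eq_of_subset ((hCΨ t).trans (Set.image_subset_range _ _)), hspan]
  · rintro ⟨W, hcover, hWi⟩
    refine ⟨fun t => Ψ '' {j | j ≠ i ∧ a j ∈ W t}, fun t => Set.image_mono fun j hj => hj.1,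
      fun j hj => ?_, fun t hΨi => ?_⟩
    · obtain ⟨t, ht⟩ := hcover j hj
      exact ⟨t, j, ⟨hj, ht⟩, rfl⟩
    · rw [hspan] at hΨi
      exact hWi t (affineSpan_le.mpr (Set.image_subset_iff.mpr fun j hj => hj.2) hΨi)

theorem stmt_2 (p : ℕ) (hp : p.Prime) (r M k : ℕ)
    (Ψ : Fin r → (Fin (M + 1) → ZMod p))
    (hones : ∀ i, Ψ i 0 = 1)
    (hinj : Function.Injective Ψ)
    (a : Fin r → (Fin M → ZMod p))
    (ha : ∀ i m, a i m = Ψ i m.succ)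
    (i : Fin r) :
    (∃ C : Fin (k + 1) → Set (Fin (M + 1) → ZMod p),
      (∀ t, C t ⊆ Ψ '' {j | j ≠ i}) ∧
      (∀ j, j ≠ i → ∃ t, Ψ j ∈ C t) ∧
      (∀ t, Ψ i ∉ Submodule.span (ZMod p) (C t)))
    ↔ (∃ W : Fin (k + 1) → AffineSubspace (ZMod p) (Fin M → ZMod p),
      (∀ j, j ≠ i → ∃ t, a j ∈ W t) ∧
      (∀ t, a i ∉ W t)) :=
  stmt_2_general p hp r M k Ψ hones a ha i
end

section
/- Let $p$ be a prime and let $M, k$ be positive integers. Let $S_{k,M} = \{z \in [0,p-1]^M : z_1 + \cdots + z_M < k\}$, viewed as a subset of $\mathbb{F}_p^M$. Then there exists a sequence $a^{(1)}, \ldots, a^{(|S_{k,M}|)}$ enumerating $S_{k,M}$ without repetition, with $a^{(|S_{k,M}|)} = (0, \ldots, 0)$, such that for all $i \in [\,|S_{k,M}|\,]$, the set $S_{k,M} \setminus \{a^{(1)}, \ldots, a^{(i)}\}$ can be covered by at most $k-1$ affine subspaces of $\mathbb{F}_p^M$, each of which contains none of the points $a^{(1)}, \ldots, a^{(i)}$.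 -/
/-!
Order the points of `S` lexicographically by their digit vectors `(z₁.val, …, z_M.val)` and
enumerate them in decreasing order, so that the last point is `0`. The points strictly below
`A = a^(i)` are exactly those that agree with `A` on the coordinates before some `m` and have
a digit `c < A_m` at `m`; for each of the `∑ A_m < k` pairs `(m, c)` these points form an affine
subspace, which contains only points below `A` and hence none of `a^(1), …, a^(i)`.
-/

open Function

theorem Finset.exists_strictAnti_comp_range_eq {α β : Type*} [LinearOrder α] {f : β → α}
    (hf : Injective f) (s : Finset β) :
    ∃ a : Fin s.card → β, StrictAnti (f ∘ a) ∧ Set.range a = s := by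
  let := LinearOrder.lift' f hf
  refine ⟨fun i => s.orderEmbOfFin rfl i.rev,
    fun i j hij => (s.orderEmbOfFin rfl).strictMono (Fin.rev_lt_rev.mpr hij), ?_⟩
  rw [Set.range_comp' (s.orderEmbOfFin rfl) Fin.rev, Fin.rev_surjective.range_eq, Set.image_univ,
    Finset.range_orderEmbOfFin]

theorem AffineSubspace.exists_fin_family_iff_exists_mem {k V P : Type*} [Ring k] [AddCommGroup V]
    [Module k V] [AddTorsor V P] {ι : Type*} [Fintype ι] {n : ℕ} (hn : Fintype.card ι ≤ n)
    (W : ι → AffineSubspace k P) :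
    ∃ W' : Fin n → AffineSubspace k P, ∀ x, (∃ t, x ∈ W' t) ↔ ∃ i, x ∈ W i := by
  obtain ⟨g⟩ := Embedding.nonempty_of_card_le (hn.trans (Fintype.card_fin n).ge)
  refine ⟨extend g W ⊥, fun x => ⟨?_, fun ⟨i, hi⟩ => ⟨g i, by rwa [g.injective.extend_apply]⟩⟩⟩
  rintro ⟨t, ht⟩
  by_cases hg : ∃ i, g i = t
  · obtain ⟨i, rfl⟩ := hg
    exact ⟨i, by rwa [g.injective.extend_apply] at ht⟩
  · rw [extend_apply' _ _ _ hg] at ht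
    exact (AffineSubspace.notMem_bot k V x ht).elim

section lexSlice

variable {K : Type*} [Ring K] {ι : Type*} [LT ι]

def lexSlice (A : ι → K) (m : ι) (c : K) : AffineSubspace K (ι → K) where
  carrier := {z | (∀ j < m, z j = A j) ∧ z m = c}
  smul_vsub_vadd_mem' := by
    rintro t z₁ z₂ z₃ ⟨h₁, h₁'⟩ ⟨h₂, h₂'⟩ ⟨h₃, h₃'⟩
    refine ⟨fun j hj => ?_, ?_⟩
    · simp [h₁ j hj, h₂ j hj, h₃ j hj]
    · simp [h₁', h₂', h₃']

end lexSlice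

section lexDigits

variable {p M : ℕ}

def lexDigits (z : Fin M → ZMod p) : Lex (Fin M → ℕ) := toLex fun j => (z j).val

theorem lexDigits_injective [NeZero p] : Injective (lexDigits : (Fin M → ZMod p) → _) :=
  fun _ _ h => funext fun j => ZMod.val_injective p (congrFun h j)

theorem lexDigits_zero_le (z : Fin M → ZMod p) : lexDigits (0 : Fin M → ZMod p) ≤ lexDigits z :=
  Pi.toLex_monotone fun j => by simp

theorem lexDigits_lt_iff [NeZero p] {z A : Fin M → ZMod p} :
    lexDigits z < lexDigits A ↔
      ∃ mc : Σ m, Fin (A m).val, z ∈ lexSlice A mc.1 (mc.2 : ℕ) := by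
  constructor
  · rintro ⟨m, hpre, hlt⟩
    exact ⟨⟨m, ⟨(z m).val, hlt⟩⟩,
      fun j hj => ZMod.val_injective p (hpre j hj), (ZMod.natCast_zmod_val _).symm⟩
  · rintro ⟨⟨m, c⟩, hpre, hm⟩
    refine ⟨m, fun j hj => congrArg ZMod.val (hpre j hj), ?_⟩
    show (z m).val < (A m).val
    rw [hm, ZMod.val_cast_of_lt (c.isLt.trans (ZMod.val_lt _))]
    exact c.isLt

end lexDigits

theorem stmt_4 (p M k : ℕ) [Fact p.Prime] (hk : 1 ≤ k)
    (s : Finset (Fin M → ZMod p))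
    (hs : s = Finset.univ.filter (fun z => ∑ j, (z j).val < k)) :
    ∃ a : Fin s.card → (Fin M → ZMod p),
      Function.Injective a ∧
      Set.range a = ↑s ∧
      a ⟨s.card - 1, by
        have h0 : (fun _ => 0 : Fin M → ZMod p) ∈ s := by
          rw [hs]
          simpa using (show 0 < k by omega)
        have := Finset.card_pos.mpr ⟨_, h0⟩
        omega⟩ = (fun _ => 0) ∧
      (∀ i : Fin s.card,
        ∃ W : Fin (k - 1) → AffineSubspace (ZMod p) (Fin M → ZMod p),
          (∀ z ∈ s, (∀ j, j ≤ i → z ≠ a j) → ∃ t, z ∈ W t) ∧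
          (∀ t, ∀ j, j ≤ i → a j ∉ W t)) := by
  obtain ⟨a, ha, ha_range⟩ := s.exists_strictAnti_comp_range_eq (lexDigits_injective (p := p))
  refine ⟨a, ha.injective.of_comp, ha_range, ?_, fun i => ?_⟩
  · have h0 : (fun _ => 0 : Fin M → ZMod p) ∈ Set.range a := by
      rw [ha_range, hs]
      simpa using (show 0 < k by omega)
    obtain ⟨j, hj⟩ := h0
    refine lexDigits_injective (le_antisymm ?_ (lexDigits_zero_le _))
    calc lexDigits (a _) ≤ lexDigits (a j) := ha.antitone (Fin.mk_le_mk.mpr (by omega))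
      _ = _ := by rw [hj]
  · have ha_mem : a i ∈ s := by
      rw [← Finset.mem_coe, ← ha_range]
      exact Set.mem_range_self i
    have hA : ∑ m, (a i m).val < k := by simpa [hs] using ha_mem
    obtain ⟨W, hW⟩ := AffineSubspace.exists_fin_family_iff_exists_mem (n := k - 1)
      (by simp only [Fintype.card_sigma, Fintype.card_fin]; omega)
      fun mc : Σ m, Fin (a i m).val => lexSlice (a i) mc.1 (mc.2 : ℕ)
    refine ⟨W, fun z hz hz_ne => ?_, fun t j hj hj_mem => ?_⟩
    · obtain ⟨j, rfl⟩ : z ∈ Set.range a := ha_range ▸ hz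
      exact (hW _).2 (lexDigits_lt_iff.1 (ha (lt_of_not_ge fun h => hz_ne j h rfl)))
    · exact (ha.antitone hj).not_gt (lexDigits_lt_iff.2 ((hW _).1 ⟨t, hj_mem⟩))
end

section
/- For every prime $p \geq 5$ and every integer $M \geq 2$, any collection of affine hyperplanes in $\mathbb{F}_p^M$, none of which contains the origin, whose union covers $S_{p+1,M} \setminus \{0^M\}$, must contain at least $p+1$ hyperplanes. Here $S_{p+1,M} = \{z \in [0,p-1]^M : z_1 + \cdots + z_M \leq p\}$ (sum in $\mathbb{Z}$), identified with a subset of $\mathbb{F}_p^M$. -/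
/-!
Restricting to the first two coordinates, it suffices to show that `p` lines `c.1 x + c.2 y = 1`
cannot cover the triangle `T = S_{p+1,2} \ {0}` of `𝔽_p²`, which has `(p - 1)(p + 4) / 2` points.
A line not parallel to a side of `T` meets it in at most `(p + 3) / 2` points, while the lines
`y = 1`, `x = 1`, `x + y = -1` meet it in `p` points. Counting the lines through the points
`(t, 0)` and `(t, 1)` shows that a cover by at most `p` lines contains no horizontal line other
than `y = 1`, and likewise in the other two directions. Let `U ⊆ T` consist of the
chords of the special lines in the cover together with some punctured lines through `0`. Then
`T \ U` is covered by the `g` generic lines alone, and if each of them spends at least `m` of its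
points on `U`, we get `|T| - |U| ≤ g ((p + 3) / 2 - m)`. Up to the symmetries of `T`, which permute
the special lines, there are four cases according to how many special lines occur, and in each a
suitable `U` makes this inequality fail for `p ≥ 5`.
-/

open Finset

namespace ZMod

variable {n : ℕ}

theorem natCast_ne_zero_of_lt {k : ℕ} (hk0 : k ≠ 0) (hk : k < n) : (k : ZMod n) ≠ 0 := by
  rw [Ne, natCast_eq_zero_iff]
  exact fun h => hk0 (Nat.eq_zero_of_dvd_of_lt h hk)

theorem sum_val_eq_sum_range [NeZero n] {M : Type*} [AddCommMonoid M] (f : ℕ → M) :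
    ∑ x : ZMod n, f x.val = ∑ i ∈ range n, f i := by
  obtain ⟨m, rfl⟩ : ∃ m, n = m + 1 := Nat.exists_eq_succ_of_ne_zero (NeZero.ne n)
  exact Fin.sum_univ_eq_sum_range f (m + 1)

theorem sum_val_mul_two [NeZero n] : (∑ x : ZMod n, x.val) * 2 = n * (n - 1) := by
  rw [sum_val_eq_sum_range (fun i => i), sum_range_id_mul_two]

theorem card_filter_val_le [NeZero n] {k : ℕ} (hk : k < n) :
    #{y : ZMod n | y.val ≤ k} = k + 1 := by
  rw [card_filter, sum_val_eq_sum_range (fun j => if j ≤ k then 1 else 0), ← card_filter,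
    show (range n).filter (· ≤ k) = range (k + 1) by ext j; simp; omega, card_range]

theorem val_add_val_lt {a b : ZMod n} (hab : a + b ≠ 0) (h : a.val + b.val ≤ n) :
    a.val + b.val < n := by
  refine h.lt_of_ne fun heq => hab ?_
  have : NeZero n := ⟨by rintro rfl; simp_all⟩
  have := val_add_val_of_le heq.ge
  exact (val_eq_zero _).1 (by omega)

theorem val_lt_val_add {a b : ZMod n} (hb : b ≠ 0) (hab : a + b ≠ 0) (h : a.val + b.val ≤ n) :
    a.val < (a + b).val := by
  rw [val_add_of_lt (val_add_val_lt hab h)]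
  exact Nat.lt_add_of_pos_right (val_pos.2 hb)

theorem val_add_val_sub [NeZero n] (a b : ZMod n) :
    b.val + (a - b).val = a.val + if a.val < b.val then n else 0 := by
  by_cases hlt : b.val + (a - b).val < n
  · have h := val_add_of_lt hlt
    rw [add_sub_cancel] at h
    rw [if_neg (by omega)]
    omega
  · have h := val_add_val_of_le (not_lt.1 hlt)
    rw [add_sub_cancel] at h
    have := val_lt (a - b)
    rw [if_pos (by omega)]
    omega

/-- Sum `val_add_val_sub` over `x`: as `g` and `x ↦ x - g x` both permute `ZMod n`, the
wrap-arounds add up to exactly one copy of `∑ x, x.val = n (n - 1) / 2`. -/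
theorem card_val_lt_mul_two [NeZero n] {g : ZMod n → ZMod n} (hg : g.Bijective)
    (hg' : (fun x => x - g x).Bijective) : #{x | x.val < (g x).val} * 2 = n - 1 := by
  have hsum : ∑ x, ((g x).val + (x - g x).val) =
      ∑ x : ZMod n, x.val + #{x | x.val < (g x).val} * n := by
    simp only [val_add_val_sub, sum_add_distrib, sum_ite, sum_const_zero, sum_const, smul_eq_mul,
      add_zero]
  rw [sum_add_distrib, hg.sum_comp (fun x => x.val), hg'.sum_comp (fun x => x.val)] at hsum
  refine Nat.eq_of_mul_eq_mul_left (Nat.pos_of_ne_zero (NeZero.ne n)) ?_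
  rw [← sum_val_mul_two, show ∑ x : ZMod n, x.val = #{x | x.val < (g x).val} * n by omega]
  ring

end ZMod

namespace Finset

variable {α : Type*} [DecidableEq α]

theorem card_le_sum_card_filter {β : Type*} {s : Finset α} {t : Finset β} (r : β → α → Prop)
    [∀ b, DecidablePred (r b)] (h : ∀ a ∈ s, ∃ b ∈ t, r b a) :
    #s ≤ ∑ b ∈ t, #{a ∈ s | r b a} := by
  refine (card_le_card fun a ha => ?_).trans card_biUnion_le
  obtain ⟨b, hb, hr⟩ := h a ha
  exact mem_biUnion.2 ⟨b, hb, mem_filter.2 ⟨ha, hr⟩⟩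

theorem one_lt_card_filter_union {A B D : Finset α} {P : α → Prop} [DecidablePred P]
    (hA : ∃ a ∈ A, P a) (hB : ∃ b ∈ B, P b) (hD : ∃ d ∈ D, P d)
    (hABD : ∀ z ∈ A, z ∈ B → z ∉ D) : 1 < #{z ∈ A ∪ B ∪ D | P z} := by
  obtain ⟨a, ha, hPa⟩ := hA
  obtain ⟨b, hb, hPb⟩ := hB
  obtain ⟨d, hd, hPd⟩ := hD
  rw [one_lt_card_iff]
  by_cases hab : a = b
  · subst hab
    exact ⟨a, d, by simp [ha, hPa], by simp [hd, hPd], fun h => hABD a ha hb (h ▸ hd)⟩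
  · exact ⟨a, b, by simp [ha, hPa], by simp [hb, hPb], hab⟩

theorem card_union_union_add_three_le {A B D : Finset α} {x y z : α} (hx : x ∈ A ∩ B)
    (hy : y ∈ A ∩ D) (hz : z ∈ B ∩ D) (hyz : y ≠ z) : #(A ∪ B ∪ D) + 3 ≤ #A + #B + #D := by
  have hAB := card_union_add_card_inter A B
  have hABD := card_union_add_card_inter (A ∪ B) D
  have h1 : 0 < #(A ∩ B) := card_pos.2 ⟨x, hx⟩
  have h2 : 1 < #((A ∪ B) ∩ D) := one_lt_card_iff.2 ⟨y, z, by simp_all, by simp_all, hyz⟩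
  omega

end Finset

namespace HyperplaneCover

section Lines

variable {K : Type*} [Field K]

/-- Every affine line avoiding the origin is `{z | OnLine c z}` for a unique nonzero `c`. -/
abbrev OnLine (c z : K × K) : Prop := c.1 * z.1 + c.2 * z.2 = 1

theorem injOn_fst_onLine {c : K × K} (h2 : c.2 ≠ 0) : Set.InjOn Prod.fst {z | OnLine c z} := by
  intro a ha b hb hab
  simp only [Set.mem_ofPred_eq, OnLine] at ha hb
  refine Prod.ext hab (mul_left_cancel₀ h2 ?_)
  rw [hab] at ha
  linear_combination ha - hb

theorem injOn_snd_onLine {c : K × K} (h1 : c.1 ≠ 0) : Set.InjOn Prod.snd {z | OnLine c z} := by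
  intro a ha b hb hab
  simp only [Set.mem_ofPred_eq, OnLine] at ha hb
  refine Prod.ext (mul_left_cancel₀ h1 ?_) hab
  rw [hab] at ha
  linear_combination ha - hb

theorem card_filter_onLine_le [Fintype K] [DecidableEq K] {c : K × K} (hc : c ≠ 0)
    (s : Finset (K × K)) : #{z ∈ s | OnLine c z} ≤ Fintype.card K := by
  have key : ∀ f : K × K → K, Set.InjOn f {z | OnLine c z} →
      #{z ∈ s | OnLine c z} ≤ Fintype.card K := fun f hf =>
    card_le_card_of_injOn f (fun _ _ => mem_univ _) (hf.mono (by simp))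
  by_cases h2 : c.2 = 0
  · exact key Prod.snd (injOn_snd_onLine fun h1 => hc (Prod.ext h1 h2))
  · exact key Prod.fst (injOn_fst_onLine h2)

theorem bijective_affine {a : K} (ha : a ≠ 0) (b : K) : (fun x => a * x + b).Bijective :=
  (Equiv.addRight b).bijective.comp (mulLeft_bijective₀ a ha)

end Lines

variable {p : ℕ} [Fact p.Prime]

/-- The paper's `S_{p+1,2} \ {0}`. -/
def triangle (p : ℕ) [NeZero p] : Finset (ZMod p × ZMod p) :=
  {z | z.1.val + z.2.val ≤ p ∧ z ≠ 0}

def IsCover (C : Finset (ZMod p × ZMod p)) : Prop :=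
  ∀ z ∈ triangle p, ∃ c ∈ C, OnLine c z

def chord (c : ZMod p × ZMod p) : Finset (ZMod p × ZMod p) := {z ∈ triangle p | OnLine c z}

def punctured (d : ZMod p × ZMod p) : Finset (ZMod p × ZMod p) :=
  (univ.erase (0 : ZMod p)).image (· • d)

def horiz : ZMod p × ZMod p := (0, 1)
def vert : ZMod p × ZMod p := (1, 0)
def antidiag : ZMod p × ZMod p := (-1, -1)

/-- The lines `y = 1`, `x = 1` and `x + y = -1`, with `p` points of the triangle each. -/
def special : Finset (ZMod p × ZMod p) := {horiz, vert, antidiag}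

/-- Not parallel to a side of the triangle. -/
def Generic (c : ZMod p × ZMod p) : Prop := c.1 ≠ 0 ∧ c.2 ≠ 0 ∧ c.1 ≠ c.2

theorem mem_triangle {z : ZMod p × ZMod p} :
    z ∈ triangle p ↔ z.1.val + z.2.val ≤ p ∧ z ≠ 0 := by
  simp [triangle]

theorem two_mul_card_triangle : 2 * #(triangle p) + 4 = p * p + 3 * p := by
  have hfiber : ∀ x : ZMod p,
      #{y : ZMod p | x.val + y.val ≤ p} + x.val + (if x = 0 then 1 else 0) = p + 1 := by
    intro x
    by_cases hx : x = 0
    · subst hx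
      simp [filter_true_of_mem fun y _ => (ZMod.val_lt y).le]
    · have := ZMod.val_pos.2 hx
      have := ZMod.val_lt x
      rw [if_neg hx, filter_congr (q := fun y : ZMod p => y.val ≤ p - x.val) (by intros; omega),
        ZMod.card_filter_val_le (by omega)]
      omega
  have hsum := sum_congr rfl fun x (_ : x ∈ univ) => hfiber x
  simp only [sum_add_distrib, sum_boole, filter_eq', mem_univ, if_true, card_singleton,
    Nat.cast_one, sum_const, card_univ, ZMod.card, smul_eq_mul] at hsum
  have hΔ : #(triangle p) + 1 = ∑ x : ZMod p, #{y : ZMod p | x.val + y.val ≤ p} := by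
    rw [show triangle p = (univ.filter fun z : ZMod p × ZMod p => z.1.val + z.2.val ≤ p).erase 0 by
        ext; simp [triangle, and_comm], card_erase_add_one (by simp), card_filter,
      Fintype.sum_prod_type]
    simp only [card_filter]
  have := ZMod.sum_val_mul_two (n := p)
  rw [Nat.mul_sub_one] at this
  have := Nat.le_mul_self p
  omega

section Symmetry

theorem mk_one_mem_triangle (t : ZMod p) : (t, 1) ∈ triangle p := by
  rw [mem_triangle, ZMod.val_one]
  exact ⟨ZMod.val_lt t, by simp [Prod.ext_iff]⟩

theorem mk_zero_mem_triangle {t : ZMod p} (ht : t ≠ 0) : (t, 0) ∈ triangle p := by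
  rw [mem_triangle, ZMod.val_zero, add_zero]
  exact ⟨(ZMod.val_lt t).le, by simp [Prod.ext_iff, ht]⟩

theorem swap_mem_triangle {z : ZMod p × ZMod p} (hz : z ∈ triangle p) : z.swap ∈ triangle p := by
  rw [mem_triangle] at hz ⊢
  exact ⟨by simpa [add_comm] using hz.1, fun h => hz.2 (by rw [← Prod.swap_swap z, h]; rfl)⟩

/-- Together with `Prod.swap`, this involution generates the symmetries of the triangle. -/
def reflect (z : ZMod p × ZMod p) : ZMod p × ZMod p := (-z.1 - z.2, z.2)

theorem reflect_mem_triangle {z : ZMod p × ZMod p} (hz : z ∈ triangle p) :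
    reflect z ∈ triangle p := by
  obtain ⟨hle, hne⟩ := mem_triangle.1 hz
  refine mem_triangle.2 ⟨?_, fun h => hne ?_⟩
  · show (-z.1 - z.2).val + z.2.val ≤ p
    by_cases hs : z.1 + z.2 = 0
    · simpa [show -z.1 - z.2 = 0 by linear_combination -hs] using (ZMod.val_lt z.2).le
    · have : NeZero (z.1 + z.2) := ⟨hs⟩
      rw [show -z.1 - z.2 = -(z.1 + z.2) by ring, ZMod.val_neg_of_ne_zero,
        ZMod.val_add_of_lt (ZMod.val_add_val_lt hs hle)]
      omega
  · simp only [reflect, Prod.ext_iff, Prod.fst_zero, Prod.snd_zero] at h ⊢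
    exact ⟨by linear_combination -h.1 - h.2, h.2⟩

theorem mk_neg_one_sub_mem_triangle (t : ZMod p) : (t, -1 - t) ∈ triangle p := by
  convert reflect_mem_triangle (swap_mem_triangle (mk_one_mem_triangle (-1 - t))) using 1
  ext <;> simp [reflect]

theorem mk_neg_mem_triangle {t : ZMod p} (ht : t ≠ 0) : (t, -t) ∈ triangle p := by
  simpa [reflect] using
    reflect_mem_triangle (swap_mem_triangle (mk_zero_mem_triangle (neg_ne_zero.2 ht)))

/-- `OnLine (reflectDual c) z ↔ OnLine c (reflect z)`. -/
def reflectDual (c : ZMod p × ZMod p) : ZMod p × ZMod p := (-c.1, c.2 - c.1)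

theorem reflectDual_reflectDual (c : ZMod p × ZMod p) : reflectDual (reflectDual c) = c := by
  simp [reflectDual]

@[simp]
theorem reflectDual_horiz : reflectDual (horiz : ZMod p × ZMod p) = horiz := by
  simp [reflectDual, horiz]

@[simp]
theorem reflectDual_antidiag : reflectDual (antidiag : ZMod p × ZMod p) = vert := by
  simp [reflectDual, antidiag, vert]

variable {C : Finset (ZMod p × ZMod p)}

theorem IsCover.image (hC : IsCover C) {f g : ZMod p × ZMod p → ZMod p × ZMod p}
    (hf : ∀ z ∈ triangle p, f z ∈ triangle p) (hg : ∀ c z, OnLine c (f z) → OnLine (g c) z) :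
    IsCover (C.image g) := by
  intro z hz
  obtain ⟨c, hc, hcz⟩ := hC (f z) (hf z hz)
  exact ⟨g c, mem_image_of_mem g hc, hg c z hcz⟩

theorem IsCover.image_swap (hC : IsCover C) : IsCover (C.image Prod.swap) :=
  hC.image (fun _ => swap_mem_triangle) fun c z h => by
    simp only [OnLine, Prod.fst_swap, Prod.snd_swap] at h ⊢
    linear_combination h

theorem IsCover.image_reflectDual (hC : IsCover C) : IsCover (C.image reflectDual) :=
  hC.image (fun _ => reflect_mem_triangle) fun c z h => by
    simp only [OnLine, reflect, reflectDual] at h ⊢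
    linear_combination h

end Symmetry

section Classification

variable {C : Finset (ZMod p × ZMod p)}

theorem IsCover.le_card_filter_fst_ne_zero (hC : IsCover C) : p - 1 ≤ #{c ∈ C | c.1 ≠ 0} := by
  have hsub : univ.erase (0 : ZMod p) ⊆ {c ∈ C | c.1 ≠ 0}.image fun c => c.1⁻¹ := by
    intro t ht
    obtain ⟨c, hc, hct⟩ := hC (t, 0) (mk_zero_mem_triangle (ne_of_mem_erase ht))
    simp only [OnLine, mul_zero, add_zero] at hct
    exact mem_image.2 ⟨c, mem_filter.2 ⟨hc, left_ne_zero_of_mul_eq_one hct⟩,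
      (eq_inv_of_mul_eq_one_right hct).symm⟩
  simpa [card_erase_of_mem, ZMod.card] using (card_le_card hsub).trans card_image_le

theorem IsCover.le_card_filter_fst_ne_zero_of_horiz_notMem (hC : IsCover C) (h : horiz ∉ C) :
    p ≤ #{c ∈ C | c.1 ≠ 0} := by
  have hsub : univ ⊆ {c ∈ C | c.1 ≠ 0}.image fun c => (1 - c.2) / c.1 := by
    intro t _
    obtain ⟨c, hc, hct⟩ := hC (t, 1) (mk_one_mem_triangle t)
    simp only [OnLine, mul_one] at hct
    have h1 : c.1 ≠ 0 := by
      rintro h0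
      rw [h0, zero_mul, zero_add] at hct
      exact h (by rwa [show c = horiz from Prod.ext h0 hct] at hc)
    refine mem_image.2 ⟨c, mem_filter.2 ⟨hc, h1⟩, ?_⟩
    field_simp
    linear_combination -hct
  simpa [ZMod.card] using (card_le_card hsub).trans card_image_le

theorem IsCover.eq_horiz (hC : IsCover C) (hCp : #C ≤ p) {c : ZMod p × ZMod p} (hc : c ∈ C)
    (h0 : c.1 = 0) : c = horiz := by
  have hsplit := card_filter_add_card_filter_not (s := C) fun c => c.1 ≠ 0
  have hc' : c ∈ {c ∈ C | ¬c.1 ≠ 0} := mem_filter.2 ⟨hc, not_not.2 h0⟩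
  by_cases hw : horiz ∈ C
  · have := hC.le_card_filter_fst_ne_zero
    exact card_le_one.1 (by omega) c hc' horiz (mem_filter.2 ⟨hw, by simp [horiz]⟩)
  · have := hC.le_card_filter_fst_ne_zero_of_horiz_notMem hw
    exact absurd (card_pos.2 ⟨c, hc'⟩) (by omega)

theorem IsCover.eq_vert (hC : IsCover C) (hCp : #C ≤ p) {c : ZMod p × ZMod p} (hc : c ∈ C)
    (h0 : c.2 = 0) : c = vert := by
  have := hC.image_swap.eq_horiz (card_image_le.trans hCp) (mem_image_of_mem _ hc) h0
  rw [← Prod.swap_swap c, this]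
  rfl

theorem IsCover.eq_antidiag (hC : IsCover C) (hCp : #C ≤ p) {c : ZMod p × ZMod p} (hc : c ∈ C)
    (h0 : c.1 = c.2) : c = antidiag := by
  have := hC.image_reflectDual.eq_vert (card_image_le.trans hCp) (mem_image_of_mem _ hc)
    (by simp [reflectDual, h0])
  rw [← reflectDual_reflectDual c, this]
  simp [reflectDual, vert, antidiag]

theorem IsCover.generic (hC : IsCover C) (hCp : #C ≤ p) {c : ZMod p × ZMod p} (hc : c ∈ C)
    (hs : c ∉ special) : Generic c :=
  ⟨fun h => hs (by simp [special, hC.eq_horiz hCp hc h]),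
    fun h => hs (by simp [special, hC.eq_vert hCp hc h]),
    fun h => hs (by simp [special, hC.eq_antidiag hCp hc h])⟩

end Classification

section Counting

/-- On the line, `x + y = g x` for an affine bijection `g` such that `x ↦ x - g x` is bijective
too. A point with `y ≠ 0` and `x + y ≠ 0` lies in the triangle only if `x.val < (g x).val`, which
by `ZMod.card_val_lt_mul_two` holds for `(p - 1) / 2` values of `x`; the points with `y = 0` or
`x + y = 0` add two more. -/
theorem Generic.two_mul_card_chord_le {c : ZMod p × ZMod p} (hc : Generic c) :
    2 * #(chord c) ≤ p + 3 := by
  obtain ⟨h1, h2, h12⟩ := hc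
  set g : ZMod p → ZMod p := fun x => (1 - c.1 / c.2) * x + 1 / c.2
  have hg : g.Bijective := bijective_affine (by
    rwa [sub_ne_zero, ne_comm, ne_eq, div_eq_one_iff_eq h2]) _
  have hg' : (fun x => x - g x).Bijective := by
    convert bijective_affine (div_ne_zero h1 h2) (-1 / c.2) using 2 with x
    ring
  set N : Finset (ZMod p) := {x | x.val < (g x).val}
  have hN : #N * 2 = p - 1 := ZMod.card_val_lt_mul_two hg hg'
  have hsub : ∀ z ∈ chord c, z.1 ∈ insert c.1⁻¹ (insert (c.1 - c.2)⁻¹ N) := by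
    intro z hz
    obtain ⟨hzT, hcz⟩ := mem_filter.1 hz
    obtain ⟨hle, -⟩ := mem_triangle.1 hzT
    simp only [OnLine] at hcz
    rw [mem_insert, mem_insert, mem_filter]
    by_cases hy : z.2 = 0
    · rw [hy, mul_zero, add_zero] at hcz
      exact Or.inl (eq_inv_of_mul_eq_one_right hcz)
    by_cases hs : z.1 + z.2 = 0
    · refine Or.inr (Or.inl (eq_inv_of_mul_eq_one_right ?_))
      linear_combination hcz - c.2 * hs
    refine Or.inr (Or.inr ⟨mem_univ _, ?_⟩)
    have : g z.1 = z.1 + z.2 := by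
      simp only [g]
      field_simp
      linear_combination -hcz
    rw [this]
    exact ZMod.val_lt_val_add hy hs hle
  have := card_le_card_of_injOn Prod.fst hsub ((injOn_fst_onLine h2).mono (by simp [chord]))
  have := card_insert_le c.1⁻¹ (insert (c.1 - c.2)⁻¹ N)
  have := card_insert_le (c.1 - c.2)⁻¹ N
  have := (Fact.out : p.Prime).pos
  omega

/-- If `S` contains the special lines of `C` and their chords lie in `U`, the points outside `U`
are covered by the generic lines of `C \ S`, each with at most `(p + 3) / 2` points in the
triangle, at least `m` of which lie in `U`. -/
theorem IsCover.two_mul_card_triangle_le {C S U : Finset (ZMod p × ZMod p)} {m : ℕ} (hC : IsCover C)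
    (hCp : #C ≤ p) (hU : U ⊆ triangle p) (hSC : ∀ w ∈ special, w ∈ C → w ∈ S) (hSU : ∀ w ∈ S, chord w ⊆ U)
    (hm : ∀ c, Generic c → m ≤ #{z ∈ U | OnLine c z}) :
    2 * #(triangle p) + 2 * m * #(C \ S) ≤ 2 * #U + (p + 3) * #(C \ S) := by
  have hgen : ∀ c ∈ C \ S, Generic c := by
    intro c hc
    obtain ⟨hcC, hcS⟩ := mem_sdiff.1 hc
    exact hC.generic hCp hcC fun hs => hcS (hSC c hs hcC)
  set V := triangle p \ U
  have hV : #V ≤ ∑ c ∈ C \ S, #{z ∈ V | OnLine c z} := by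
    refine card_le_sum_card_filter OnLine fun z hz => ?_
    obtain ⟨hzT, hzU⟩ := mem_sdiff.1 hz
    obtain ⟨c, hc, hcz⟩ := hC z hzT
    exact ⟨c, mem_sdiff.2 ⟨hc, fun hcS => hzU (hSU c hcS (mem_filter.2 ⟨hzT, hcz⟩))⟩, hcz⟩
  have hline : ∀ c ∈ C \ S, 2 * #{z ∈ V | OnLine c z} + 2 * m ≤ p + 3 := by
    intro c hc
    have hsplit : #{z ∈ V | OnLine c z} + #{z ∈ U | OnLine c z} = #(chord c) := by
      rw [chord, ← card_sdiff_add_card_eq_card (filter_subset_filter _ hU)]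
      congr 2
      ext z
      simp only [V, mem_sdiff, mem_filter]
      tauto
    have := (hgen c hc).two_mul_card_chord_le
    have := hm c (hgen c hc)
    omega
  have hsum := sum_le_sum hline
  rw [sum_add_distrib, ← mul_sum, sum_const, sum_const, smul_eq_mul, smul_eq_mul] at hsum
  have hT : #(triangle p) ≤ #V + #U := card_le_card_sdiff_add_card
  nlinarith

end Counting

section Chords

theorem mem_chord {c z : ZMod p × ZMod p} : z ∈ chord c ↔ z ∈ triangle p ∧ OnLine c z :=
  mem_filter

theorem chord_subset_triangle (c : ZMod p × ZMod p) : chord c ⊆ triangle p :=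
  filter_subset _ _

theorem card_chord_le {c : ZMod p × ZMod p} (hc : c ≠ 0) : #(chord c) ≤ p := by
  simpa [chord] using card_filter_onLine_le hc (triangle p)

theorem card_punctured_add_one_le (d : ZMod p × ZMod p) : #(punctured d) + 1 ≤ p := by
  have h := card_image_le (s := univ.erase (0 : ZMod p)) (f := (· • d))
  rw [card_erase_of_mem (mem_univ _), card_univ, ZMod.card] at h
  exact Nat.add_le_of_le_sub (Fact.out : p.Prime).pos h

theorem smul_mem_punctured {t : ZMod p} (ht : t ≠ 0) (d : ZMod p × ZMod p) :
    t • d ∈ punctured d :=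
  mem_image_of_mem _ (mem_erase.2 ⟨ht, mem_univ _⟩)

theorem exists_mem_punctured_onLine {c d : ZMod p × ZMod p} (h : c.1 * d.1 + c.2 * d.2 ≠ 0) :
    ∃ z ∈ punctured d, OnLine c z := by
  refine ⟨(c.1 * d.1 + c.2 * d.2)⁻¹ • d, smul_mem_punctured (inv_ne_zero h) d, ?_⟩
  simp only [OnLine, Prod.smul_fst, Prod.smul_snd, smul_eq_mul]
  field_simp

theorem disjoint_punctured {d e : ZMod p × ZMod p} (h : d.1 * e.2 ≠ d.2 * e.1) :
    Disjoint (punctured d) (punctured e) := by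
  simp only [punctured, disjoint_left, mem_image, mem_erase, not_exists, not_and]
  rintro _ ⟨t, ⟨ht, -⟩, rfl⟩ s - hst
  simp only [Prod.ext_iff, Prod.smul_fst, Prod.smul_snd, smul_eq_mul] at hst
  exact h (mul_left_cancel₀ ht (by linear_combination -e.2 * hst.1 + e.1 * hst.2))

theorem punctured_subset_triangle {d : ZMod p × ZMod p}
    (hd : d = (1, 0) ∨ d = (0, 1) ∨ d = (1, -1)) : punctured d ⊆ triangle p := by
  simp only [punctured, image_subset_iff, mem_erase]
  rintro t ⟨ht, -⟩
  rcases hd with rfl | rfl | rfl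
  · simpa using mk_zero_mem_triangle ht
  · simpa using swap_mem_triangle (mk_zero_mem_triangle ht)
  · simpa using mk_neg_mem_triangle ht

theorem mk_one_mem_chord_horiz (t : ZMod p) : (t, 1) ∈ chord horiz :=
  mem_chord.2 ⟨mk_one_mem_triangle t, by simp [OnLine, horiz]⟩

theorem mk_one_mem_chord_vert (t : ZMod p) : (1, t) ∈ chord vert :=
  mem_chord.2 ⟨swap_mem_triangle (mk_one_mem_triangle t), by simp [OnLine, vert]⟩

theorem exists_mem_chord_horiz_onLine {c : ZMod p × ZMod p} (h1 : c.1 ≠ 0) :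
    ∃ z ∈ chord horiz, OnLine c z := by
  refine ⟨((1 - c.2) / c.1, 1), mk_one_mem_chord_horiz _, ?_⟩
  simp only [OnLine]
  field_simp
  ring

theorem exists_mem_chord_vert_onLine {c : ZMod p × ZMod p} (h2 : c.2 ≠ 0) :
    ∃ z ∈ chord vert, OnLine c z := by
  refine ⟨(1, (1 - c.1) / c.2), mk_one_mem_chord_vert _, ?_⟩
  simp only [OnLine]
  field_simp
  ring

theorem exists_mem_chord_antidiag_onLine {c : ZMod p × ZMod p} (h12 : c.1 ≠ c.2) :
    ∃ z ∈ chord antidiag, OnLine c z := by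
  have : c.1 - c.2 ≠ 0 := sub_ne_zero.2 h12
  refine ⟨((1 + c.2) / (c.1 - c.2), -1 - (1 + c.2) / (c.1 - c.2)),
    mem_chord.2 ⟨mk_neg_one_sub_mem_triangle _, by simp only [OnLine, antidiag]; ring⟩, ?_⟩
  simp only [OnLine]
  field_simp
  ring

theorem snd_eq_one_of_mem_chord_horiz {z : ZMod p × ZMod p} (hz : z ∈ chord horiz) : z.2 = 1 := by
  simpa [OnLine, horiz] using (mem_chord.1 hz).2

theorem fst_eq_one_of_mem_chord_vert {z : ZMod p × ZMod p} (hz : z ∈ chord vert) : z.1 = 1 := by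
  simpa [OnLine, vert] using (mem_chord.1 hz).2


end Chords

section Cases

variable {C : Finset (ZMod p × ZMod p)}

theorem Generic.three_le_card_filter_axes {c : ZMod p × ZMod p} (hc : Generic c) :
    3 ≤ #{z ∈ punctured (1, 0) ∪ punctured (0, 1) ∪ punctured (1, -1) | OnLine c z} := by
  have hXY := disjoint_punctured (p := p) (d := (1, 0)) (e := (0, 1)) (by simp)
  have hXD := disjoint_punctured (p := p) (d := (1, 0)) (e := (1, -1)) (by simp)
  have hYD := disjoint_punctured (p := p) (d := (0, 1)) (e := (1, -1)) (by simp)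
  rw [filter_union, filter_union,
    card_union_of_disjoint
      (disjoint_union_left.2 ⟨disjoint_filter_filter hXD, disjoint_filter_filter hYD⟩),
    card_union_of_disjoint (disjoint_filter_filter hXY)]
  have meets : ∀ d, c.1 * d.1 + c.2 * d.2 ≠ 0 → 0 < #{z ∈ punctured d | OnLine c z} :=
    fun d hd => card_pos.2 (filter_nonempty_iff.2 (exists_mem_punctured_onLine hd))
  have := meets (1, 0) (by simpa using hc.1)
  have := meets (0, 1) (by simpa using hc.2.1)
  have := meets (1, -1) (by simpa [← sub_eq_add_neg, sub_eq_zero] using hc.2.2)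
  omega

theorem IsCover.lt_card_of_no_special (hp : 3 ≤ p) (hC : IsCover C) (h₁ : horiz ∉ C)
    (h₂ : vert ∉ C) (h₃ : antidiag ∉ C) : p < #C := by
  by_contra! hCp
  have key := hC.two_mul_card_triangle_le hCp (S := ∅) (m := 3)
    (union_subset (union_subset (punctured_subset_triangle (by simp))
      (punctured_subset_triangle (by simp))) (punctured_subset_triangle (by simp)))
    (by simp [special, h₁, h₂, h₃])
    (by simp)
    fun c hc => hc.three_le_card_filter_axes
  have hX := card_punctured_add_one_le (p := p) (1, 0)
  have hY := card_punctured_add_one_le (p := p) (0, 1)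
  have hD := card_punctured_add_one_le (p := p) (1, -1)
  have hU := card_union_le (punctured (1, 0) ∪ punctured (0, 1)) (punctured (p := p) (1, -1))
  have hU' := card_union_le (punctured (p := p) (1, 0)) (punctured (0, 1))
  rw [sdiff_empty] at key
  have hT := two_mul_card_triangle (p := p)
  nlinarith

theorem IsCover.lt_card_of_horiz_only (hp : 4 ≤ p) (hC : IsCover C) (h₁ : horiz ∈ C)
    (h₂ : vert ∉ C) (h₃ : antidiag ∉ C) : p < #C := by
  by_contra! hCp
  have key := hC.two_mul_card_triangle_le hCp (S := {horiz}) (U := chord horiz) (m := 1)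
    (chord_subset_triangle _)
    (by simp [special, h₁, h₂, h₃])
    (by simp)
    fun c hc => card_pos.2 (filter_nonempty_iff.2 (exists_mem_chord_horiz_onLine hc.1))
  have hU := card_chord_le (c := (horiz : ZMod p × ZMod p)) (by simp [horiz])
  have hS : #(C \ {horiz}) + 1 = #C := by
    rw [← card_singleton (horiz : ZMod p × ZMod p),
      card_sdiff_add_card_eq_card (singleton_subset_iff.2 h₁)]
  have hT := two_mul_card_triangle (p := p)
  nlinarith

theorem Generic.one_lt_card_filter_horiz_vert_axis (h2 : (2 : ZMod p) ≠ 0) {c : ZMod p × ZMod p}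
    (hc : Generic c) : 1 < #{z ∈ chord horiz ∪ chord vert ∪ punctured (1, -1) | OnLine c z} := by
  refine one_lt_card_filter_union (exists_mem_chord_horiz_onLine hc.1)
    (exists_mem_chord_vert_onLine hc.2.1)
    (exists_mem_punctured_onLine (by simpa [← sub_eq_add_neg, sub_eq_zero] using hc.2.2))
    fun z hzA hzB hzD => h2 ?_
  obtain ⟨t, -, rfl⟩ := mem_image.1 hzD
  have h₁ := snd_eq_one_of_mem_chord_horiz hzA
  have h₂ := fst_eq_one_of_mem_chord_vert hzB
  simp only [Prod.smul_fst, Prod.smul_snd, smul_eq_mul] at h₁ h₂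
  linear_combination -h₁ - h₂

theorem card_horiz_vert_axis_add_four_le (h2 : (2 : ZMod p) ≠ 0) :
    #(chord horiz ∪ chord vert ∪ punctured ((1, -1) : ZMod p × ZMod p)) + 4 ≤ 3 * p := by
  have := card_union_union_add_three_le (x := ((1, 1) : ZMod p × ZMod p)) (y := (-1, 1))
    (z := (1, -1)) (mem_inter.2 ⟨mk_one_mem_chord_horiz 1, mk_one_mem_chord_vert 1⟩)
    (mem_inter.2 ⟨mk_one_mem_chord_horiz (-1),
      by simpa using smul_mem_punctured (neg_ne_zero.2 (one_ne_zero (α := ZMod p))) (1, -1)⟩)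
    (mem_inter.2 ⟨mk_one_mem_chord_vert (-1),
      by simpa using smul_mem_punctured (one_ne_zero (α := ZMod p)) (1, -1)⟩)
    fun h => h2 (by linear_combination -(congrArg Prod.fst h))
  have := card_chord_le (c := (horiz : ZMod p × ZMod p)) (by simp [horiz])
  have := card_chord_le (c := (vert : ZMod p × ZMod p)) (by simp [vert])
  have := card_punctured_add_one_le (p := p) (1, -1)
  omega

theorem IsCover.lt_card_of_horiz_vert_only (h2 : (2 : ZMod p) ≠ 0) (hC : IsCover C)
    (h₁ : horiz ∈ C) (h₂ : vert ∈ C) (h₃ : antidiag ∉ C) : p < #C := by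
  by_contra! hCp
  have key := hC.two_mul_card_triangle_le hCp (S := {horiz, vert})
    (U := chord horiz ∪ chord vert ∪ punctured (1, -1)) (m := 2)
    (union_subset (union_subset (chord_subset_triangle _) (chord_subset_triangle _))
      (punctured_subset_triangle (by simp)))
    (by simp [special, h₁, h₂, h₃])
    (by
      simp only [mem_insert, mem_singleton, forall_eq_or_imp, forall_eq]
      exact ⟨subset_union_left.trans subset_union_left, subset_union_right.trans subset_union_left⟩)
    fun c hc => hc.one_lt_card_filter_horiz_vert_axis h2
  have hU := card_horiz_vert_axis_add_four_le h2
  have hS : #(C \ {horiz, vert}) + 2 = #C := by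
    rw [← card_pair (show (horiz : ZMod p × ZMod p) ≠ vert by simp [horiz, vert]),
      card_sdiff_add_card_eq_card (insert_subset h₁ (singleton_subset_iff.2 h₂))]
  have hT := two_mul_card_triangle (p := p)
  nlinarith

theorem Generic.one_lt_card_filter_special_chords (h3 : (3 : ZMod p) ≠ 0) {c : ZMod p × ZMod p}
    (hc : Generic c) : 1 < #{z ∈ chord horiz ∪ chord vert ∪ chord antidiag | OnLine c z} := by
  refine one_lt_card_filter_union (exists_mem_chord_horiz_onLine hc.1)
    (exists_mem_chord_vert_onLine hc.2.1) (exists_mem_chord_antidiag_onLine hc.2.2)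
    fun z hzA hzB hzE => h3 ?_
  have h₁ := snd_eq_one_of_mem_chord_horiz hzA
  have h₂ := fst_eq_one_of_mem_chord_vert hzB
  have h₃ := (mem_chord.1 hzE).2
  simp only [OnLine, antidiag] at h₃
  linear_combination -h₃ - h₁ - h₂

theorem card_special_chords_add_three_le (h3 : (3 : ZMod p) ≠ 0) :
    #(chord horiz ∪ chord vert ∪ chord (antidiag : ZMod p × ZMod p)) + 3 ≤ 3 * p := by
  have := card_union_union_add_three_le (x := ((1, 1) : ZMod p × ZMod p)) (y := (-2, 1))
    (z := (1, -2)) (D := chord antidiag)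
    (mem_inter.2 ⟨mk_one_mem_chord_horiz 1, mk_one_mem_chord_vert 1⟩)
    (mem_inter.2 ⟨mk_one_mem_chord_horiz (-2),
      mem_chord.2 ⟨mk_one_mem_triangle (-2), by norm_num [OnLine, antidiag]⟩⟩)
    (mem_inter.2 ⟨mk_one_mem_chord_vert (-2),
      mem_chord.2 ⟨swap_mem_triangle (mk_one_mem_triangle (-2)),
        by norm_num [OnLine, antidiag]⟩⟩)
    fun h => h3 (by linear_combination -(congrArg Prod.fst h))
  have := card_chord_le (c := (horiz : ZMod p × ZMod p)) (by simp [horiz])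
  have := card_chord_le (c := (vert : ZMod p × ZMod p)) (by simp [vert])
  have := card_chord_le (c := (antidiag : ZMod p × ZMod p)) (by simp [antidiag])
  omega

theorem IsCover.lt_card_of_all_special (h3 : (3 : ZMod p) ≠ 0) (hC : IsCover C)
    (h₁ : horiz ∈ C) (h₂ : vert ∈ C) (h₃ : antidiag ∈ C) : p < #C := by
  by_contra! hCp
  have key := hC.two_mul_card_triangle_le hCp (S := {horiz, vert, antidiag})
    (U := chord horiz ∪ chord vert ∪ chord antidiag) (m := 2)
    (union_subset (union_subset (chord_subset_triangle _) (chord_subset_triangle _))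
      (chord_subset_triangle _))
    (fun _ h _ => h)
    (by
      simp only [mem_insert, mem_singleton, forall_eq_or_imp, forall_eq]
      exact ⟨subset_union_left.trans subset_union_left, subset_union_right.trans subset_union_left,
        subset_union_right⟩)
    fun c hc => hc.one_lt_card_filter_special_chords h3
  have hU := card_special_chords_add_three_le h3
  have hS : #(C \ {horiz, vert, antidiag}) + 3 = #C := by
    rw [← card_sdiff_add_card_eq_card
        (insert_subset h₁ (insert_subset h₂ (singleton_subset_iff.2 h₃))),
      card_insert_of_notMem (by simp [horiz, vert, antidiag]),
      card_pair (by simp [vert, antidiag])]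
  have hT := two_mul_card_triangle (p := p)
  nlinarith

theorem IsCover.lt_card_of_horiz_vert (hp : 5 ≤ p) (hC : IsCover C) (h₁ : horiz ∈ C)
    (h₂ : vert ∈ C) : p < #C := by
  by_cases h₃ : antidiag ∈ C
  · exact hC.lt_card_of_all_special
      (by exact_mod_cast ZMod.natCast_ne_zero_of_lt three_ne_zero (by omega)) h₁ h₂ h₃
  · exact hC.lt_card_of_horiz_vert_only
      (by exact_mod_cast ZMod.natCast_ne_zero_of_lt two_ne_zero (by omega)) h₁ h₂ h₃

theorem IsCover.lt_card_of_horiz (hp : 5 ≤ p) (hC : IsCover C) (h₁ : horiz ∈ C) : p < #C := by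
  by_cases h₂ : vert ∈ C
  · exact hC.lt_card_of_horiz_vert hp h₁ h₂
  by_cases h₃ : antidiag ∈ C
  · have h₁' := mem_image_of_mem reflectDual h₁
    have h₃' := mem_image_of_mem reflectDual h₃
    rw [reflectDual_horiz] at h₁'
    rw [reflectDual_antidiag] at h₃'
    exact (hC.image_reflectDual.lt_card_of_horiz_vert hp h₁' h₃').trans_le card_image_le
  · exact hC.lt_card_of_horiz_only (by omega) h₁ h₂ h₃

theorem IsCover.lt_card (hp : 5 ≤ p) (hC : IsCover C) : p < #C := by
  by_cases h₁ : horiz ∈ C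
  · exact hC.lt_card_of_horiz hp h₁
  by_cases h₂ : vert ∈ C
  · exact (hC.image_swap.lt_card_of_horiz hp (mem_image_of_mem Prod.swap h₂)).trans_le
      card_image_le
  by_cases h₃ : antidiag ∈ C
  · have h₃' := mem_image_of_mem Prod.swap (mem_image_of_mem reflectDual h₃)
    rw [reflectDual_antidiag] at h₃'
    exact ((hC.image_reflectDual.image_swap.lt_card_of_horiz hp h₃').trans_le
      card_image_le).trans_le card_image_le
  · exact hC.lt_card_of_no_special (by omega) h₁ h₂ h₃

end Cases

end HyperplaneCover

open HyperplaneCover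

theorem stmt_6 (p M : ℕ) [Fact p.Prime] (hp5 : 5 ≤ p) (hM : 2 ≤ M)
    (L : Finset (Set (Fin M → ZMod p)))
    (hhyp : ∀ S ∈ L, ∃ (c : Fin M → ZMod p) (b : ZMod p), c ≠ 0 ∧ b ≠ 0 ∧
      S = {z | ∑ j, c j * z j = b})
    (hcover : ∀ z : Fin M → ZMod p, (∑ j, (z j).val) ≤ p → z ≠ 0 →
      ∃ S ∈ L, z ∈ S) :
    p + 1 ≤ L.card := by
  classical
  obtain ⟨m, rfl⟩ : ∃ m, M = m + 2 := ⟨M - 2, by omega⟩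
  choose! c b _ hb hS using hhyp
  have hC : IsCover (L.image fun S => (c S 0 / b S, c S 1 / b S)) := by
    intro z hz
    obtain ⟨hval, hz0⟩ := mem_triangle.1 hz
    set w : Fin (m + 2) → ZMod p := Fin.cons z.1 (Fin.cons z.2 0)
    obtain ⟨S, hSL, hwS⟩ := hcover w (by simpa [w, Fin.sum_univ_succ] using hval)
      fun h => hz0 (Prod.ext (congrFun h 0) (congrFun h 1))
    refine ⟨_, mem_image_of_mem _ hSL, ?_⟩
    rw [hS S hSL, Set.mem_ofPred_eq] at hwS
    simp only [w, Fin.sum_univ_succ, Fin.cons_zero, Fin.cons_succ, Pi.zero_apply, mul_zero,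
      sum_const_zero, add_zero] at hwS
    have := hb S hSL
    simp only [OnLine]
    field_simp
    exact hwS
  exact (hC.lt_card hp5).trans_le card_image_le
end

section
/- Suppose non-zero affine hyperplanes $H_1, \ldots, H_m$ in $\mathbb{F}_p^M$ (with $M \geq 2$, none containing the origin) cover $S_{p+1,M} \setminus \{0^M\}$. Then none of the $H_j$ equals the coordinate subspace $\{z \in \mathbb{F}_p^M : z_M = 0\}$, and the intersections $H_j \cap \{z_M = 0\}$ are each either empty or contained in a non-zero affine hyperplane of the subspace $\{z_M = 0\} \cong \mathbb{F}_p^{M-1}$, and the nonempty ones cover $(S_{p+1,M} \cap \{z_M = 0\}) \setminus \{0^M\}$, which equals $S_{p+1,M-1} \setminus \{0^{M-1}\}$ under the natural identification. -/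
/-! Every hyperplane `∑ c_j z_j = b` with `b ≠ 0` misses the origin; on `{z_M = 0}` its equation
loses the term `c_M z_M`, and padding a point of `S_{p+1,M-1}` by a zero last coordinate gives a
point of `S_{p+1,M}`. -/

section AffineHyperplane

variable {R ι : Type*} [NonUnitalNonAssocSemiring R]

lemma zero_notMem_affineHyperplane [Fintype ι] {c : ι → R} {b : R} (hb : b ≠ 0) :
    (0 : ι → R) ∉ {z | ∑ j, c j * z j = b} := by
  simpa using hb.symm

lemma affineHyperplane_inter_last_eq_zero {n : ℕ} (c : Fin (n + 1) → R) (b : R) :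
    {z : Fin (n + 1) → R | ∑ j, c j * z j = b} ∩ {z | z (Fin.last n) = 0} =
      {z | z (Fin.last n) = 0 ∧ ∑ i : Fin n, c i.castSucc * z i.castSucc = b} := by
  ext z
  rw [Set.mem_inter_iff, Set.mem_ofPred_eq, Set.mem_ofPred_eq, Set.mem_ofPred_eq, and_comm]
  exact and_congr_right fun hz => by rw [Fin.sum_univ_castSucc, hz, mul_zero, add_zero]

end AffineHyperplane

section SnocZero

variable {R : Type*} [Zero R] {n : ℕ}

lemma snoc_zero_eq_dite (w : Fin n → R) :
    (Fin.snoc w 0 : Fin (n + 1) → R) = fun j => if h : j.val < n then w ⟨j.val, h⟩ else 0 := by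
  ext j
  induction j using Fin.lastCases <;> simp

lemma snoc_zero_ne_zero {w : Fin n → R} (hw : w ≠ 0) :
    (Fin.snoc w 0 : Fin (n + 1) → R) ≠ 0 :=
  fun h => hw <| funext fun i => by simpa using congrFun h i.castSucc

end SnocZero

theorem stmt_7 (p M : ℕ) (hM : 2 ≤ M)
    (L : Finset (Set (Fin M → ZMod p)))
    (hhyp : ∀ S ∈ L, ∃ (c : Fin M → ZMod p) (b : ZMod p), c ≠ 0 ∧ b ≠ 0 ∧
      S = {z | ∑ j, c j * z j = b})
    (hcover : ∀ z : Fin M → ZMod p, (∑ j, (z j).val) ≤ p → z ≠ 0 →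
      ∃ S ∈ L, z ∈ S) :
    (∀ S ∈ L, S ≠ {z | z ⟨M - 1, by omega⟩ = 0}) ∧
    (∀ S ∈ L, (S ∩ {z | z ⟨M - 1, by omega⟩ = 0} = ∅) ∨
      ∃ (c' : Fin (M - 1) → ZMod p) (b' : ZMod p), c' ≠ 0 ∧ b' ≠ 0 ∧
        S ∩ {z | z ⟨M - 1, by omega⟩ = 0} ⊆
          {z | z ⟨M - 1, by omega⟩ = 0 ∧
            ∑ j : Fin (M - 1), c' j * z ⟨j.val, by omega⟩ = b'}) ∧
    (∀ w : Fin (M - 1) → ZMod p, (∑ j, (w j).val) ≤ p → w ≠ 0 →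
      ∃ S ∈ L, (fun j : Fin M =>
        if h : j.val < M - 1 then w ⟨j.val, h⟩ else 0) ∈ S) := by
  obtain ⟨n, rfl⟩ : ∃ n, M = n + 1 := ⟨M - 1, by omega⟩
  refine ⟨fun S hS hSeq => ?_, fun S hS => ?_, fun w hw hw0 => ?_⟩
  · obtain ⟨c, b, -, hb, rfl⟩ := hhyp S hS
    exact zero_notMem_affineHyperplane hb (by rw [hSeq]; rfl)
  · obtain ⟨c, b, -, hb, rfl⟩ := hhyp S hS
    rw [show (⟨n + 1 - 1, _⟩ : Fin (n + 1)) = Fin.last n from rfl,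
      affineHyperplane_inter_last_eq_zero]
    by_cases hc : (fun i : Fin n => c i.castSucc) = 0
    · left
      exact Set.eq_empty_of_forall_notMem fun z hz => hb <| by
        simpa [congrFun hc] using hz.2.symm
    · exact Or.inr ⟨_, b, hc, hb, subset_rfl⟩
  · obtain ⟨S, hS, hwS⟩ := hcover (Fin.snoc w 0)
      (by simpa [Fin.sum_univ_castSucc] using hw) (snoc_zero_ne_zero hw0)
    exact ⟨S, hS, snoc_zero_eq_dite w ▸ hwS⟩
end

section
/- Let $p$ be a prime, $M \geq 1$, $k \in [M(p-1)+1]$, and fix $w \in [0,p-1]^M$ with $w_1 + \cdots + w_M = k-1$ and $w_1 > 0$. Define $P : \mathbb{F}_p^M \to \mathbb{F}_p$ by $P(x) = \binom{|x_1|_p}{w_1 - 1}\binom{|x_2|_p}{w_2}\cdots\binom{|x_M|_p}{w_M} \bmod p$, where $|x_i|_p \in [0,p-1]$ is the integer representative of $x_i$. Then for all $x, h_1, \ldots, h_{k-2} \in \mathbb{F}_p^M$ with $h_1 = \cdots = h_{w_1 - 1} = e_1$, $h_{w_1} = \cdots = h_{w_1 + w_2 - 1} = e_2$, \ldots, $h_{k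 - w_M - 1} = \cdots = h_{k-2} = e_M$ (where $e_j$ is the $j$-th standard basis vector), the iterated difference $\nabla_{h_1} \cdots \nabla_{h_{k-2}} P(x)$ equals $1$ in $\mathbb{F}_p$. -/
/-- Difference operator `∇_h f (x) = f (x + h) - f x`. -/
def diffOp {G R : Type*} [Add G] [Sub R] (h : G) (f : G → R) : G → R :=
  fun x => f (x + h) - f x

/-!
On integers `∇₁ binom(x, m + 1) = binom(x, m)` (Pascal's rule). Reading `x ∈ ZMod p` through its
representative in `[0, p)`, this survives reduction mod `p` as long as `m + 1 < p`, since at the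
wrap-around `x = p - 1 ↦ 0` both sides differ by `binom(p, m + 1) ≡ 0`. Differences in direction
`e_j` only see the `j`-th factor of a product `∏ᵢ binom(|xᵢ|_p, vᵢ)`, so applying `e_j` exactly `v_j`
times for every `j` lowers every exponent to `0` and leaves the constant `1`.
-/

open Finset

theorem diffOp_one_choose_val (p m : ℕ) [Fact p.Prime] (hm : m + 1 < p) :
    diffOp 1 (fun x : ZMod p => ((x.val.choose (m + 1) : ℕ) : ZMod p)) =
      fun x => ((x.val.choose m : ℕ) : ZMod p) := by
  funext x
  have hx : x.val < p := x.val_lt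
  rw [diffOp, ZMod.val_add, ZMod.val_one, sub_eq_iff_eq_add, ← Nat.cast_add]
  rcases (show x.val + 1 ≤ p from hx).lt_or_eq with hlt | heq
  · rw [Nat.mod_eq_of_lt hlt, Nat.choose_succ_succ', add_comm]
  · rw [heq, Nat.mod_self, Nat.choose_zero_succ, Nat.cast_zero, eq_comm,
      ← Nat.choose_succ_succ', heq, ZMod.natCast_eq_zero_iff]
    exact (Fact.out : p.Prime).dvd_choose_self (by omega) hm

theorem diffOp_single_prod {ι G R : Type*} [Fintype ι] [DecidableEq ι] [AddMonoid G]
    [CommRing R] (f : ι → G → R) (j : ι) (h : G) :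
    diffOp (Pi.single j h) (fun x => ∏ i, f i (x i)) =
      fun x => ∏ i, Function.update f j (diffOp h (f j)) i (x i) := by
  funext x
  have hoff : ∀ i ∈ univ.erase j, f i ((x + Pi.single j h : ι → G) i) = f i (x i) := fun i hi => by
    simp [(mem_erase.mp hi).1]
  have hupd : ∀ i ∈ univ.erase j, Function.update f j (diffOp h (f j)) i (x i) = f i (x i) :=
    fun i hi => by simp [(mem_erase.mp hi).1]
  simp only [diffOp]
  rw [← mul_prod_erase univ _ (mem_univ j), ← mul_prod_erase univ _ (mem_univ j),
    ← mul_prod_erase univ _ (mem_univ j), prod_congr rfl hoff, prod_congr rfl hupd]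
  simp [diffOp, sub_mul]

def chooseProd {ι : Type*} [Fintype ι] (p : ℕ) (v : ι → ℕ) (x : ι → ZMod p) : ZMod p :=
  ∏ i, ((x i).val.choose (v i) : ZMod p)

section chooseProd

variable {ι : Type*} [Fintype ι] [DecidableEq ι] {p : ℕ} [Fact p.Prime]

theorem diffOp_single_chooseProd {v : ι → ℕ} {j : ι} {m : ℕ} (hv : v j = m + 1)
    (hm : m + 1 < p) :
    diffOp (Pi.single j 1) (chooseProd p v) = chooseProd p (Function.update v j m) := by
  have hdiff := diffOp_single_prod (fun i (y : ZMod p) => ((y.val.choose (v i) : ℕ) : ZMod p)) j 1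
  simp only [hv, diffOp_one_choose_val p m hm] at hdiff
  unfold chooseProd
  rw [hdiff]
  funext x
  refine prod_congr rfl fun i _ => ?_
  rcases eq_or_ne i j with rfl | hij <;> simp [*]

theorem foldr_replicate_diffOp_chooseProd {v : ι → ℕ} {j : ι} {n : ℕ} (hn : n ≤ v j)
    (hvp : v j < p) :
    (List.replicate n (Pi.single j 1)).foldr diffOp (chooseProd p v) =
      chooseProd p (Function.update v j (v j - n)) := by
  induction n with
  | zero => simp
  | succ n ih =>
    rw [List.replicate_succ, List.foldr_cons, ih (by omega),
      diffOp_single_chooseProd (m := v j - (n + 1)) (by simp; omega) (by omega),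
      Function.update_idem]

theorem foldr_flatMap_diffOp_chooseProd {v : ι → ℕ} (hvp : ∀ i, v i < p) {l : List ι}
    (hl : l.Nodup) :
    (l.flatMap fun j => List.replicate (v j) (Pi.single j 1)).foldr diffOp (chooseProd p v) =
      chooseProd p fun i => if i ∈ l then 0 else v i := by
  induction l with
  | nil => simp
  | cons a l ih =>
    obtain ⟨ha, hl⟩ := List.nodup_cons.mp hl
    rw [List.flatMap_cons, List.foldr_append, ih hl,
      foldr_replicate_diffOp_chooseProd (by simp [ha]) (by simp [ha, hvp])]
    congr 1
    funext i
    rcases eq_or_ne i a with rfl | hia <;> simp [*]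

end chooseProd

theorem stmt_11_general (p M : ℕ) [Fact p.Prime] (hM : 0 < M)
    (w : Fin M → ℕ) (hw : ∀ j, w j ≤ p - 1)
    (P : (Fin M → ZMod p) → ZMod p)
    (hP : ∀ x, P x = ∏ j : Fin M,
      ((Nat.choose (x j).val
        (if j = (⟨0, hM⟩ : Fin M) then w ⟨0, hM⟩ - 1 else w j) : ℕ) : ZMod p))
    -- the sequence of difference directions: `e₁` repeated `w₁ - 1` times, then
    -- `e_j` repeated `w_j` times for each `j ≥ 2` (in order); its length is `k - 2`.
    (H : List (Fin M → ZMod p))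
    (hH : H = (List.finRange M).flatMap (fun j =>
      List.replicate (if j = (⟨0, hM⟩ : Fin M) then w ⟨0, hM⟩ - 1 else w j)
        (fun t => if t = j then (1 : ZMod p) else 0))) :
    ∀ x, (H.foldr diffOp P) x = 1 := by
  set v : Fin M → ℕ := fun j => if j = ⟨0, hM⟩ then w ⟨0, hM⟩ - 1 else w j
  have hvp : ∀ j, v j < p := fun j => by
    have := (Fact.out : p.Prime).pos
    have := hw j
    have := hw ⟨0, hM⟩
    simp only [v]
    split_ifs <;> omega
  have hPv : P = chooseProd p v := funext hP
  have hdir (j : Fin M) : (fun t => if t = j then (1 : ZMod p) else 0) = Pi.single j 1 :=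
    funext fun t => (Pi.single_apply j 1 t).symm
  simp only [hdir] at hH
  intro x
  rw [hH, hPv, foldr_flatMap_diffOp_chooseProd hvp (List.nodup_finRange M)]
  simp [chooseProd]

theorem stmt_11 (p M k : ℕ) [Fact p.Prime] (hM : 0 < M)
    (hk : k ≤ M * (p - 1) + 1)
    (w : Fin M → ℕ) (hw : ∀ j, w j ≤ p - 1)
    (hsum : ∑ j, w j = k - 1) (hw1 : 0 < w ⟨0, hM⟩)
    (P : (Fin M → ZMod p) → ZMod p)
    (hP : ∀ x, P x = ∏ j : Fin M,
      ((Nat.choose (x j).val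
        (if j = (⟨0, hM⟩ : Fin M) then w ⟨0, hM⟩ - 1 else w j) : ℕ) : ZMod p))
    -- the sequence of difference directions: `e₁` repeated `w₁ - 1` times, then
    -- `e_j` repeated `w_j` times for each `j ≥ 2` (in order); its length is `k - 2`.
    (H : List (Fin M → ZMod p))
    (hH : H = (List.finRange M).flatMap (fun j =>
      List.replicate (if j = (⟨0, hM⟩ : Fin M) then w ⟨0, hM⟩ - 1 else w j)
        (fun t => if t = j then (1 : ZMod p) else 0))) :
    ∀ x, (H.foldr diffOp P) x = 1 :=
  stmt_11_general p M hM w hw P hP H hH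
end

section
/- Let $p$ be a prime and $M \geq 1$, and consider the system $\Phi_{k,M}$ of linear forms $\phi_z(x, t_1, \ldots, t_M) = x + z_1 t_1 + \cdots + z_M t_M$ indexed by $z \in S_{k,M}$, where $S_{k,M} = \{z \in [0,p-1]^M : z_1 + \cdots + z_M < k\}$ (sum in $\mathbb{Z}$) and $3 \leq k \leq \min(p, M(p-1)+1)$. Then for each $z \in S_{k,M}$, the set $S_{k,M} \setminus \{z\}$ can be covered by $k-1$ affine hyperplanes of $\mathbb{F}_p^M$ each avoiding $z$; in particular, $\Phi_{k,M}$ has Cauchy-Schwarz complexity at most $k-2$. -/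
/-!
Let `y ≠ z` lie in `S_{k,M}`. Either `y j < z j` for some coordinate `j`, and `y` lies on one of
the `z j` hyperplanes `y j = c` with `c < z j`; or `z ≤ y` coordinatewise, so that
`∑ z < ∑ y < k`, and `y` lies on one of the `k - 1 - ∑ z` hyperplanes `∑ y = d` with
`∑ z < d < k`. As `k ≤ p`, no two of the integers involved are congruent mod `p`, so none of these
`k - 1` hyperplanes contains `z`. After lifting `y` to `(1, y)`, the hyperplane `c ⬝ᵥ y = b` becomes
the kernel of the linear form `(-b, c) ⬝ᵥ ·`, which does not vanish at `(1, z)`.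
-/

open Finset Matrix

theorem Finset.exists_fin_family_covering {α : Type*} (S : Finset α) {n : ℕ} (hn : #S ≤ n)
    (d : α) : ∃ f : Fin n → α, (∀ t, f t = d ∨ f t ∈ S) ∧ ∀ a ∈ S, ∃ t, f t = a := by
  refine ⟨fun t => if h : t.val < #S then S.equivFin.symm ⟨t, h⟩ else d, fun t => ?_, ?_⟩
  · dsimp only
    split_ifs
    · exact .inr (Subtype.prop _)
    · exact .inl rfl
  · intro a ha
    have hlt := (S.equivFin ⟨a, ha⟩).isLt
    refine ⟨⟨S.equivFin ⟨a, ha⟩, hlt.trans_le hn⟩, ?_⟩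
    simp [hlt]

theorem cons_one_notMem_span_of_dotProduct_ne {R : Type*} [CommRing R] {M : ℕ}
    {C : Set (Fin M → R)} {c : Fin M → R} {b : R} {z : Fin M → R} (hz : c ⬝ᵥ z ≠ b) (hC : C ⊆ {y | c ⬝ᵥ y = b}) :
    (Fin.cons 1 z : Fin (M + 1) → R) ∉
      Submodule.span R ((fun y => (Fin.cons 1 y : Fin (M + 1) → R)) '' C) := by
  let φ := dotProductBilin R R (Fin.cons (-b) c : Fin (M + 1) → R)
  have hφ (y : Fin M → R) : φ (Fin.cons 1 y) = c ⬝ᵥ y - b :=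
    (cons_dotProduct_cons _ _ _ _).trans (by ring)
  have hspan : Submodule.span R ((fun y => (Fin.cons 1 y : Fin (M + 1) → R)) '' C)
      ≤ LinearMap.ker φ := by
    rw [Submodule.span_le]
    rintro _ ⟨y, hy, rfl⟩
    simpa [hφ, sub_eq_zero] using hC hy
  exact fun h => sub_ne_zero.mpr hz (by simpa [hφ] using hspan h)

theorem exists_hyperplane_avoiding {R : Type*} [Ring R] [Nontrivial R] {M : ℕ} [NeZero M]
    (z : Fin M → R) : ∃ q : (Fin M → R) × R, q.1 ≠ 0 ∧ q.1 ⬝ᵥ z ≠ q.2 :=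
  ⟨(Pi.single 0 1, z 0 + 1), by simp, by simp⟩

section HyperplaneCover

variable {p M : ℕ} [Fact p.Prime]

theorem one_dotProduct_eq_natCast_sum_val (y : Fin M → ZMod p) :
    1 ⬝ᵥ y = ((∑ j, (y j).val : ℕ) : ZMod p) := by
  simp [one_dotProduct]

/-- The hyperplane `c ⬝ᵥ y = b` is encoded as the pair `(c, b)`. -/
def hyperplaneCover (k : ℕ) (z : Fin M → ZMod p) : Finset ((Fin M → ZMod p) × ZMod p) :=
  (univ.sigma fun j => range (z j).val).image
      (fun x => ((Pi.single x.1 1 : Fin M → ZMod p), (x.2 : ZMod p))) ∪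
    (Ioo (∑ j, (z j).val) k).image fun d : ℕ => ((1 : Fin M → ZMod p), (d : ZMod p))

theorem card_hyperplaneCover_le {k : ℕ} {z : Fin M → ZMod p} (hz : ∑ j, (z j).val < k) :
    #(hyperplaneCover k z) ≤ k - 1 := by
  unfold hyperplaneCover
  refine (card_union_le _ _).trans ((add_le_add card_image_le card_image_le).trans ?_)
  rw [card_sigma, Nat.card_Ioo]
  simp only [card_range]
  omega

theorem hyperplaneCover_avoids [NeZero M] {k : ℕ} (hkp : k ≤ p) (z : Fin M → ZMod p) :
    ∀ q ∈ hyperplaneCover k z, q.1 ≠ 0 ∧ q.1 ⬝ᵥ z ≠ q.2 := by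
  intro q hq
  simp only [hyperplaneCover, mem_union, mem_image, mem_sigma, mem_univ, mem_range, true_and,
    mem_Ioo] at hq
  rcases hq with ⟨⟨j, c⟩, hc, rfl⟩ | ⟨d, ⟨hzd, hdk⟩, rfl⟩
  · refine ⟨by simp, fun h => ?_⟩
    rw [single_one_dotProduct] at h
    have := congrArg ZMod.val h
    rw [ZMod.val_cast_of_lt (hc.trans (ZMod.val_lt _))] at this
    omega
  · refine ⟨one_ne_zero, fun h => ?_⟩
    rw [one_dotProduct_eq_natCast_sum_val] at h
    have := congrArg ZMod.val h
    rw [ZMod.val_cast_of_lt (by omega), ZMod.val_cast_of_lt (by omega)] at this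
    omega

theorem exists_mem_hyperplaneCover {k : ℕ} {y z : Fin M → ZMod p}
    (hy : ∑ j, (y j).val < k) (hyz : y ≠ z) :
    ∃ q ∈ hyperplaneCover k z, q.1 ⬝ᵥ y = q.2 := by
  by_cases hlt : ∃ j, (y j).val < (z j).val
  · obtain ⟨j, hj⟩ := hlt
    refine ⟨(Pi.single j 1, ((y j).val : ZMod p)), mem_union_left _ ?_, ?_⟩
    · exact mem_image.mpr ⟨⟨j, (y j).val⟩, by simpa using hj, rfl⟩
    · rw [single_one_dotProduct, ZMod.natCast_zmod_val]
  · push Not at hlt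
    have hzy : ∑ j, (z j).val < ∑ j, (y j).val := by
      obtain ⟨j, hj⟩ := Function.ne_iff.mp hyz
      exact sum_lt_sum (fun j _ => hlt j) ⟨j, mem_univ j,
        (hlt j).lt_of_ne fun h => hj (ZMod.val_injective p h.symm)⟩
    refine ⟨(1, ((∑ j, (y j).val : ℕ) : ZMod p)), mem_union_right _ ?_,
      one_dotProduct_eq_natCast_sum_val y⟩
    exact mem_image.mpr ⟨_, mem_Ioo.mpr ⟨hzy, hy⟩, rfl⟩

end HyperplaneCover

theorem stmt_15_general (p M k : ℕ) [Fact p.Prime] (hM : 1 ≤ M)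
    (hkp : k ≤ p)
    (s : Finset (Fin M → ZMod p))
    (hs : s = Finset.univ.filter (fun z => ∑ j, (z j).val < k)) :
    ∀ z ∈ s,
      -- the covering by `k - 1` affine hyperplanes avoiding `z`
      (∃ (c : Fin (k - 1) → (Fin M → ZMod p)) (b : Fin (k - 1) → ZMod p),
        (∀ t, c t ≠ 0) ∧
        (∀ y ∈ s, y ≠ z → ∃ t, ∑ j, c t j * y j = b t) ∧
        (∀ t, ∑ j, c t j * z j ≠ b t)) ∧
      -- in particular, `Φ_{k,M}` has Cauchy-Schwarz complexity at most `k - 2` at `z`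
      (∃ C : Fin (k - 1) → Set (Fin (M + 1) → ZMod p),
        (∀ t, C t ⊆ (fun w => Fin.cons (1 : ZMod p) w) '' ((↑s : Set (Fin M → ZMod p)) \ {z})) ∧
        (∀ w ∈ s, w ≠ z → ∃ t, Fin.cons (1 : ZMod p) w ∈ C t) ∧
        (∀ t, Fin.cons (1 : ZMod p) z ∉ Submodule.span (ZMod p) (C t))) := by
  have : NeZero M := ⟨by omega⟩
  have hmem (y : Fin M → ZMod p) : y ∈ s ↔ ∑ j, (y j).val < k := by simp [hs]
  intro z hz
  -- the cover may have fewer than `k - 1` hyperplanes; pad it with one more avoiding `z`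
  obtain ⟨d, hd⟩ := exists_hyperplane_avoiding z
  obtain ⟨q, hq_mem, hq_cover⟩ :=
    (hyperplaneCover k z).exists_fin_family_covering (card_hyperplaneCover_le ((hmem z).1 hz)) d
  have havoid (t : Fin (k - 1)) : (q t).1 ≠ 0 ∧ (q t).1 ⬝ᵥ z ≠ (q t).2 := by
    rcases hq_mem t with h | h
    · exact h ▸ hd
    · exact hyperplaneCover_avoids hkp z _ h
  have hcover (y) (hy : y ∈ s) (hyz : y ≠ z) : ∃ t, (q t).1 ⬝ᵥ y = (q t).2 := by
    obtain ⟨r, hr, hry⟩ := exists_mem_hyperplaneCover ((hmem y).1 hy) hyz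
    obtain ⟨t, rfl⟩ := hq_cover r hr
    exact ⟨t, hry⟩
  refine ⟨⟨fun t => (q t).1, fun t => (q t).2, fun t => (havoid t).1, hcover,
    fun t => (havoid t).2⟩, fun t => Fin.cons 1 '' ((↑s \ {z}) ∩ {y | (q t).1 ⬝ᵥ y = (q t).2}),
    fun t => Set.image_mono Set.inter_subset_left, fun w hw hwz => ?_,
    fun t => cons_one_notMem_span_of_dotProduct_ne (havoid t).2 Set.inter_subset_right⟩
  obtain ⟨t, ht⟩ := hcover w hw hwz
  exact ⟨t, w, ⟨⟨hw, hwz⟩, ht⟩, rfl⟩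

theorem stmt_15 (p M k : ℕ) [Fact p.Prime] (hM : 1 ≤ M) (hk3 : 3 ≤ k)
    (hkp : k ≤ p) (hk' : k ≤ M * (p - 1) + 1)
    (s : Finset (Fin M → ZMod p))
    (hs : s = Finset.univ.filter (fun z => ∑ j, (z j).val < k)) :
    ∀ z ∈ s,
      -- the covering by `k - 1` affine hyperplanes avoiding `z`
      (∃ (c : Fin (k - 1) → (Fin M → ZMod p)) (b : Fin (k - 1) → ZMod p),
        (∀ t, c t ≠ 0) ∧
        (∀ y ∈ s, y ≠ z → ∃ t, ∑ j, c t j * y j = b t) ∧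
        (∀ t, ∑ j, c t j * z j ≠ b t)) ∧
      -- in particular, `Φ_{k,M}` has Cauchy-Schwarz complexity at most `k - 2` at `z`
      (∃ C : Fin (k - 1) → Set (Fin (M + 1) → ZMod p),
        (∀ t, C t ⊆ (fun w => Fin.cons (1 : ZMod p) w) '' ((↑s : Set (Fin M → ZMod p)) \ {z})) ∧
        (∀ w ∈ s, w ≠ z → ∃ t, Fin.cons (1 : ZMod p) w ∈ C t) ∧
        (∀ t, Fin.cons (1 : ZMod p) z ∉ Submodule.span (ZMod p) (C t))) :=
  stmt_15_general p M k hM hkp s hs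
end
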